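/- arXiv:1410.2976 — 2 statements merged into one kernel-verified Lean document; each statement's English description precedes it below -/
import Mathlib

section
/- Let Y be a local martingale deflator and H a self-financing investment-consumption strategy over a finite horizon T with H_{T+1} = 0 and initial wealth X_0 = H_1 · P_0. Then the expected deflated total consumption satisfies E[Σ_{s=0}^{T} C_s Y_s] = X_0 Y_0, where C_t = (H_t − H_{t+1}) · P_t and C_T = H_T · P_T. -/
open MeasureTheory Filter

noncomputable section

/-- Euclidean dot product on `Fin n → ℝ`. -/
def dotp {n : ℕ} (a b : Fin n → ℝ) : ℝ := ∑ i, a i * b i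

/-- A discrete-time local martingale: there is a localizing sequence of stopping
times tending to infinity such that each stopped process is a true martingale. -/
def IsLocalMartingale {Ω : Type*} {m : MeasurableSpace Ω} {E : Type*}
    [NormedAddCommGroup E] [NormedSpace ℝ E] [CompleteSpace E]
    (ℱ : MeasureTheory.Filtration ℕ m) (μ : Measure Ω) (M : ℕ → Ω → E) : Prop :=
  ∃ τ : ℕ → Ω → ℕ, (∀ N, IsStoppingTime ℱ (fun ω => (τ N ω : WithTop ℕ))) ∧
    (∀ ω, Tendsto (fun N => τ N ω) atTop atTop) ∧
    ∀ N, Martingale (MeasureTheory.stoppedProcess M (fun ω => (τ N ω : WithTop ℕ))) ℱ μ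

/-!
With `M = Y • P`, the process `N_t = ∑_{s=1}^t C_s Y_s + (H_{t+1} ⬝ P_t) Y_t` has increments
`N_{t+1} - N_t = H_{t+1} ⬝ (M_{t+1} - M_t)`. As `H_{t+1}` is `ℱ_t`-measurable and `M` is a local
martingale, such an increment has zero conditional expectation on each set of an increasing
`ℱ_t`-measurable cover of `Ω` (bound `|H_{t+1}|` and stay before the localizing time).
Hence `N_{t+1} ≥ 0` forces `N_t ≥ 0`: on `{N_t < 0}` the increment would be positive with zero
mean. Starting from `N_T = ∑_{s=1}^T C_s Y_s ≥ 0`, all `N_t` are nonnegative, and their Lebesgue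
integrals agree piece by piece on the cover (refined so that `N_t` is bounded there), which
gives `E N_T = E N_0` even when these are infinite.
-/

open Set

section LocallyCentered

/-- `d` has zero generalized conditional expectation given `m'`. -/
def IsLocallyCentered {Ω : Type*} (m' : MeasurableSpace Ω) {m : MeasurableSpace Ω}
    (μ : Measure Ω) (d : Ω → ℝ) : Prop :=
  ∃ A : ℕ → Set Ω, (∀ k, MeasurableSet[m'] (A k)) ∧ Monotone A ∧ ⋃ k, A k = univ ∧
    ∀ k, IntegrableOn d (A k) μ ∧
      ∀ G, MeasurableSet[m'] G → G ⊆ A k → ∫ ω in G, d ω ∂μ = 0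

variable {Ω : Type*} {m' m : MeasurableSpace Ω} {μ : Measure Ω} {f g : Ω → ℝ}

theorem IsLocallyCentered.ae_nonneg_of_ae_nonneg (hd : IsLocallyCentered m' μ (g - f))
    (hm : m' ≤ m) (hf : Measurable[m'] f) (hg : 0 ≤ᵐ[μ] g) : 0 ≤ᵐ[μ] f := by
  obtain ⟨A, hAm, -, hAcov, hA⟩ := hd
  have hpiece : ∀ k, ∀ᵐ ω ∂μ, ω ∈ A k → 0 ≤ f ω := by
    intro k
    set G := {ω | f ω < 0} ∩ A k
    have hGm : MeasurableSet[m'] G := (measurableSet_lt hf measurable_const).inter (hAm k)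
    have hpos : ∀ᵐ ω ∂μ.restrict G, 0 < (g - f) ω := by
      filter_upwards [ae_restrict_of_ae hg, ae_restrict_mem (hm _ hGm)] with ω hgω hω
      have hfω : f ω < 0 := hω.1
      simp only [Pi.sub_apply, Pi.zero_apply] at hgω ⊢
      linarith
    have hzero : g - f =ᵐ[μ.restrict G] 0 :=
      (integral_eq_zero_iff_of_nonneg_ae (hpos.mono fun _ h => h.le)
        ((hA k).1.mono_set inter_subset_right)).1 ((hA k).2 G hGm inter_subset_right)
    have hnull : ∀ᵐ ω ∂μ, ω ∈ G → False := by
      refine (ae_restrict_iff' (hm _ hGm)).1 ?_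
      filter_upwards [hpos, hzero] with ω h1 h2
      exact h1.ne' h2
    filter_upwards [hnull] with ω hω hωA
    exact not_lt.1 fun hneg => hω ⟨hneg, hωA⟩
  filter_upwards [ae_all_iff.2 hpiece] with ω hω
  obtain ⟨k, hk⟩ := mem_iUnion.1 (hAcov ▸ mem_univ ω)
  exact hω k hk

theorem IsLocallyCentered.lintegral_ofReal_eq [IsFiniteMeasure μ]
    (hd : IsLocallyCentered m' μ (g - f)) (hm : m' ≤ m) (hf : Measurable[m'] f)
    (hf0 : 0 ≤ᵐ[μ] f) (hg0 : 0 ≤ᵐ[μ] g) :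
    ∫⁻ ω, ENNReal.ofReal (g ω) ∂μ = ∫⁻ ω, ENNReal.ofReal (f ω) ∂μ := by
  obtain ⟨A, hAm, hAmono, hAcov, hA⟩ := hd
  set B : ℕ → Set Ω := fun k => A k ∩ {ω | f ω ≤ k}
  have hBm : ∀ k, MeasurableSet (B k) :=
    fun k => hm _ ((hAm k).inter (measurableSet_le hf measurable_const))
  have hBmono : Monotone B := fun i j hij =>
    inter_subset_inter (hAmono hij) fun ω (h : f ω ≤ i) => h.trans (by exact_mod_cast hij)
  have hBcov : ⋃ k, B k = univ := by
    refine eq_univ_of_forall fun ω => ?_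
    obtain ⟨i, hi⟩ := mem_iUnion.1 (hAcov ▸ mem_univ ω)
    obtain ⟨j, hj⟩ := exists_nat_ge (f ω)
    exact mem_iUnion.2 ⟨max i j, hAmono (le_max_left i j) hi,
      hj.trans (by exact_mod_cast le_max_right i j)⟩
  have hpiece : ∀ k, ∫⁻ ω in B k, ENNReal.ofReal (g ω) ∂μ
      = ∫⁻ ω in B k, ENNReal.ofReal (f ω) ∂μ := by
    intro k
    have hfint : IntegrableOn f (B k) μ := by
      refine Integrable.of_bound ((hf.mono hm le_rfl).aestronglyMeasurable) k ?_
      filter_upwards [ae_restrict_of_ae hf0, ae_restrict_mem (hBm k)] with ω h0 hω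
      rw [Real.norm_of_nonneg h0]
      exact hω.2
    have hdint : IntegrableOn (g - f) (B k) μ := (hA k).1.mono_set inter_subset_left
    have hgint : IntegrableOn g (B k) μ := by simpa using hdint.add hfint
    have hint : ∫ ω in B k, g ω ∂μ = ∫ ω in B k, f ω ∂μ := by
      have hd0 := (hA k).2 (B k) ((hAm k).inter (measurableSet_le hf measurable_const))
        inter_subset_left
      rw [integral_sub' hgint hfint] at hd0
      linarith
    rw [← ofReal_integral_eq_lintegral_ofReal hgint (ae_restrict_of_ae hg0),
      ← ofReal_integral_eq_lintegral_ofReal hfint (ae_restrict_of_ae hf0), hint]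
  have hsup : ∀ φ : Ω → ENNReal, ∫⁻ ω, φ ω ∂μ = ⨆ k, ∫⁻ ω in B k, φ ω ∂μ := fun φ => by
    rw [← setLIntegral_univ, ← hBcov, setLIntegral_iUnion_of_directed _ hBmono.directed_le]
  simp_rw [hsup, hpiece]

theorem integral_eq_of_isLocallyCentered_sub [IsFiniteMeasure μ] {ℱ : Filtration ℕ m}
    {N : ℕ → Ω → ℝ} {T : ℕ} (hN : Adapted ℱ N)
    (hinc : ∀ t < T, IsLocallyCentered (ℱ t) μ (N (t + 1) - N t)) (hNT : 0 ≤ᵐ[μ] N T) :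
    ∫ ω, N T ω ∂μ = ∫ ω, N 0 ω ∂μ := by
  have hnonneg : ∀ t ≤ T, 0 ≤ᵐ[μ] N t := fun t ht =>
    Nat.decreasingInduction (motive := fun t _ => 0 ≤ᵐ[μ] N t)
      (fun t htT ih => (hinc t htT).ae_nonneg_of_ae_nonneg (ℱ.le t) (hN t) ih) hNT ht
  have hlintegral : ∀ t ≤ T, ∫⁻ ω, ENNReal.ofReal (N t ω) ∂μ
      = ∫⁻ ω, ENNReal.ofReal (N 0 ω) ∂μ := by
    intro t ht
    induction t with
    | zero => rfl
    | succ t ih =>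
      rw [(hinc t ht).lintegral_ofReal_eq (ℱ.le t) (hN t) (hnonneg t (by omega)) (hnonneg _ ht),
        ih (by omega)]
  have hmeas : ∀ t, AEStronglyMeasurable (N t) μ :=
    fun t => ((hN t).mono (ℱ.le t) le_rfl).aestronglyMeasurable
  rw [integral_eq_lintegral_of_nonneg_ae (hnonneg T le_rfl) (hmeas T), hlintegral T le_rfl,
    integral_eq_lintegral_of_nonneg_ae (hnonneg 0 (Nat.zero_le T)) (hmeas 0)]

end LocallyCentered

namespace MeasureTheory.Martingale

variable {Ω ι : Type*} {m : MeasurableSpace Ω} {μ : Measure Ω} [Preorder ι] {ℱ : Filtration ι m}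

theorem comp_continuousLinearMap {E F : Type*} [NormedAddCommGroup E]
    [NormedSpace ℝ E] [CompleteSpace E] [NormedAddCommGroup F] [NormedSpace ℝ F]
    [CompleteSpace F] {X : ι → Ω → E} (hX : Martingale X ℱ μ) (L : E →L[ℝ] F) :
    Martingale (fun i ω => L (X i ω)) ℱ μ :=
  ⟨fun i => L.continuous.comp_stronglyMeasurable (hX.stronglyMeasurable i), fun _ j hij =>
    (L.comp_condExp_comm (hX.integrable j)).symm.trans
      ((hX.condExp_ae_eq hij).fun_comp L)⟩

theorem integral_mul_sub_eq_zero [IsFiniteMeasure μ] {X : ι → Ω → ℝ}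
    (hX : Martingale X ℱ μ) {s t : ι} (hst : s ≤ t) {ψ : Ω → ℝ}
    (hψ : StronglyMeasurable[ℱ s] ψ) {c : ℝ} (hψc : ∀ ω, |ψ ω| ≤ c) :
    ∫ ω, ψ ω * (X t ω - X s ω) ∂μ = 0 := by
  have hΔ : Integrable (X t - X s) μ := (hX.integrable t).sub (hX.integrable s)
  have hcond : μ[X t - X s | ℱ s] =ᵐ[μ] 0 := by
    filter_upwards [condExp_sub (hX.integrable t) (hX.integrable s) (ℱ s),
      hX.condExp_ae_eq hst, hX.condExp_ae_eq (le_refl s)] with ω h h1 h2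
    simp [h, h1, h2]
  calc ∫ ω, ψ ω * (X t ω - X s ω) ∂μ = ∫ ω, (μ[ψ * (X t - X s) | ℱ s]) ω ∂μ :=
        (integral_condExp (ℱ.le s)).symm
    _ = ∫ ω, ψ ω * (μ[X t - X s | ℱ s]) ω ∂μ :=
        integral_congr_ae (condExp_stronglyMeasurable_mul_of_bound (ℱ.le s) hψ hΔ c
          (ae_of_all _ hψc))
    _ = 0 := by
        rw [integral_congr_ae (g := 0) (hcond.mono fun ω h => by simp [h])]
        simp

theorem integral_dotp_sub_eq_zero [IsFiniteMeasure μ] {n : ℕ} {X : ι → Ω → Fin n → ℝ}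
    (hX : Martingale X ℱ μ) {s t : ι} (hst : s ≤ t) {ψ : Ω → Fin n → ℝ}
    (hψ : StronglyMeasurable[ℱ s] ψ) {c : ℝ} (hψc : ∀ ω, ‖ψ ω‖ ≤ c) :
    Integrable (fun ω => dotp (ψ ω) (X t ω - X s ω)) μ ∧
      ∫ ω, dotp (ψ ω) (X t ω - X s ω) ∂μ = 0 := by
  have hX' : ∀ i, Martingale (fun j ω => X j ω i) ℱ μ :=
    fun i => hX.comp_continuousLinearMap (ContinuousLinearMap.proj i)
  have hψ' : ∀ i, StronglyMeasurable[ℱ s] (fun ω => ψ ω i) :=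
    fun i => (continuous_apply i).comp_stronglyMeasurable hψ
  have hψc' : ∀ i ω, |ψ ω i| ≤ c := fun i ω => (norm_le_pi_norm (ψ ω) i).trans (hψc ω)
  have hint : ∀ i, Integrable (fun ω => ψ ω i * (X t ω i - X s ω i)) μ := fun i =>
    ((hX' i).integrable t |>.sub ((hX' i).integrable s)).bdd_mul
      ((hψ' i).mono (ℱ.le s)).aestronglyMeasurable (ae_of_all _ (hψc' i))
  simp only [dotp, Pi.sub_apply]
  refine ⟨integrable_finsetSum _ fun i _ => hint i, ?_⟩
  rw [integral_finsetSum _ fun i _ => hint i]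
  exact Finset.sum_eq_zero fun i _ => (hX' i).integral_mul_sub_eq_zero hst (hψ' i) (hψc' i)

end MeasureTheory.Martingale

section LocalMartingale

variable {Ω : Type*} {m : MeasurableSpace Ω} {μ : Measure Ω}

theorem IsLocalMartingale.isLocallyCentered_dotp_sub [IsFiniteMeasure μ]
    {ℱ : Filtration ℕ m} {n : ℕ} {M : ℕ → Ω → Fin n → ℝ} (hM : IsLocalMartingale ℱ μ M)
    {t : ℕ} {h : Ω → Fin n → ℝ} (hh : StronglyMeasurable[ℱ t] h) :
    IsLocallyCentered (ℱ t) μ (fun ω => dotp (h ω) (M (t + 1) ω - M t ω)) := by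
  obtain ⟨τ, hτ, hτlim, hmart⟩ := hM
  set A : ℕ → Set Ω := fun k => {ω | ‖h ω‖ ≤ k} ∩ ⋂ j ≥ k, {ω | t < τ j ω}
  have hAm : ∀ k, MeasurableSet[ℱ t] (A k) := by
    intro k
    refine (hh.norm.measurableSet_le stronglyMeasurable_const).inter
      (MeasurableSet.iInter fun j => MeasurableSet.iInter fun _ => ?_)
    simpa using (hτ j).measurableSet_gt t
  have hAmono : Monotone A := fun i j hij =>
    inter_subset_inter (fun ω (hω : ‖h ω‖ ≤ i) => hω.trans (by exact_mod_cast hij))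
      (biInter_subset_biInter_left fun l (hl : j ≤ l) => hij.trans hl)
  have hAcov : ⋃ k, A k = univ := by
    refine eq_univ_of_forall fun ω => mem_iUnion.2 ?_
    obtain ⟨K, hK⟩ := eventually_atTop.1 ((hτlim ω).eventually_gt_atTop t)
    obtain ⟨c, hc⟩ := exists_nat_ge ‖h ω‖
    exact ⟨max K c, hc.trans (by exact_mod_cast le_max_right K c),
      mem_iInter₂.2 fun j hj => hK j ((le_max_left K c).trans hj)⟩
  have hcentered : ∀ k G, MeasurableSet[ℱ t] G → G ⊆ A k →
      Integrable (G.indicator fun ω => dotp (h ω) (M (t + 1) ω - M t ω)) μ ∧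
        ∫ ω, G.indicator (fun ω => dotp (h ω) (M (t + 1) ω - M t ω)) ω ∂μ = 0 := by
    intro k G hG hGA
    have heq : (G.indicator fun ω => dotp (h ω) (M (t + 1) ω - M t ω)) = fun ω =>
        dotp (G.indicator h ω) (stoppedProcess M (fun ω => (τ k ω : WithTop ℕ)) (t + 1) ω -
          stoppedProcess M (fun ω => (τ k ω : WithTop ℕ)) t ω) := by
      funext ω
      by_cases hω : ω ∈ G
      · have hτω : t < τ k ω := mem_iInter₂.1 (hGA hω).2 k le_rfl
        rw [indicator_of_mem hω, indicator_of_mem hω, stoppedProcess_eq_of_le,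
          stoppedProcess_eq_of_le]
        exacts [WithTop.coe_le_coe.2 hτω.le, WithTop.coe_le_coe.2 hτω]
      · simp [indicator_of_notMem hω, dotp]
    rw [heq]
    refine (hmart k).integral_dotp_sub_eq_zero t.le_succ (hh.indicator hG) (c := k) fun ω => ?_
    by_cases hω : ω ∈ G
    · simpa [indicator_of_mem hω] using (hGA hω).1
    · simp [indicator_of_notMem hω]
  refine ⟨A, hAm, hAmono, hAcov, fun k => ⟨?_, fun G hG hGA => ?_⟩⟩
  · exact (integrable_indicator_iff (ℱ.le t _ (hAm k))).1
      (hcentered k (A k) (hAm k) subset_rfl).1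
  · rw [← integral_indicator (ℱ.le t _ hG)]
    exact (hcentered k G hG hGA).2

end LocalMartingale

theorem Measurable.dotp {Ω : Type*} {m : MeasurableSpace Ω} {n : ℕ} {a b : Ω → Fin n → ℝ}
    (ha : Measurable a) (hb : Measurable b) : Measurable fun ω => dotp (a ω) (b ω) := by
  unfold _root_.dotp; fun_prop

section DeflatedValue

variable {Ω : Type*} {n : ℕ} (P : ℕ → Ω → Fin n → ℝ) (Y : ℕ → Ω → ℝ) (H : ℕ → Ω → Fin n → ℝ)

/-- `∑_{s=1}^t C_s Y_s + X_t Y_t`, with the wealth `X_t = H_{t+1} ⬝ P_t` after trading at `t`. -/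
def deflatedValue (t : ℕ) (ω : Ω) : ℝ :=
  ∑ s ∈ Finset.Icc 1 t, dotp (H s ω - H (s + 1) ω) (P s ω) * Y s ω +
    dotp (H (t + 1) ω) (P t ω) * Y t ω

theorem deflatedValue_succ_sub (t : ℕ) :
    deflatedValue P Y H (t + 1) - deflatedValue P Y H t =
      fun ω => dotp (H (t + 1) ω) (Y (t + 1) ω • P (t + 1) ω - Y t ω • P t ω) := by
  funext ω
  have hdot : ∀ a b : Fin n → ℝ, dotp a b = a ⬝ᵥ b := fun _ _ => rfl
  simp only [deflatedValue, Pi.sub_apply, Finset.sum_Icc_succ_top (Nat.le_add_left 1 t), hdot,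
    sub_dotProduct, dotProduct_sub, dotProduct_smul, smul_eq_mul]
  ring

theorem deflatedValue_zero :
    deflatedValue P Y H 0 = fun ω => dotp (H 1 ω) (P 0 ω) * Y 0 ω := by
  funext ω
  simp [deflatedValue]

theorem adapted_deflatedValue {m : MeasurableSpace Ω} {ℱ : Filtration ℕ m} (hP : Adapted ℱ P)
    (hY : Adapted ℱ Y) (hH : ∀ t, Measurable[ℱ t] (H (t + 1))) :
    Adapted ℱ (deflatedValue P Y H) := by
  intro t
  have hHt : ∀ s ≤ t, Measurable[ℱ t] (H (s + 1)) := fun s hs => (hH s).mono (ℱ.mono hs) le_rfl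
  refine .add (Finset.measurable_sum _ fun s hs => ?_)
    (((hHt t le_rfl).dotp (hP t)).mul (hY t))
  obtain ⟨hs1, hst⟩ := Finset.mem_Icc.1 hs
  obtain ⟨r, rfl⟩ := Nat.exists_eq_add_of_le' hs1
  exact (((hHt r (by omega)).sub (hHt (r + 1) (by omega))).dotp
    ((hP _).mono (ℱ.mono hst) le_rfl)).mul ((hY _).mono (ℱ.mono hst) le_rfl)

end DeflatedValue

theorem stmt1_general {Ω : Type*} {m : MeasurableSpace Ω} (μ : Measure Ω) [IsProbabilityMeasure μ]
    (ℱ : MeasureTheory.Filtration ℕ m) {n : ℕ}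
    (P : ℕ → Ω → Fin n → ℝ) (Y : ℕ → Ω → ℝ) (H : ℕ → Ω → Fin n → ℝ)
    (T : ℕ)
    (hP : Adapted ℱ P) (hY : Adapted ℱ Y)
    (hYpos : ∀ t, ∀ᵐ ω ∂μ, 0 < Y t ω)
    (hPY : IsLocalMartingale ℱ μ (fun t ω => Y t ω • P t ω))
    (hHpred : ∀ t, StronglyMeasurable[ℱ t] (H (t + 1)))
    (hSF : ∀ t, 1 ≤ t → t ≤ T →
      ∀ᵐ ω ∂μ, 0 ≤ dotp (H t ω - H (t + 1) ω) (P t ω))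
    (hHT : ∀ ω, H (T + 1) ω = 0) :
    ∫ ω, (∑ s ∈ Finset.Icc 1 T, dotp (H s ω - H (s + 1) ω) (P s ω) * Y s ω) ∂μ
      = ∫ ω, dotp (H 1 ω) (P 0 ω) * Y 0 ω ∂μ := by
  have hT : deflatedValue P Y H T = fun ω =>
      ∑ s ∈ Finset.Icc 1 T, dotp (H s ω - H (s + 1) ω) (P s ω) * Y s ω := by
    funext ω
    simp [deflatedValue, hHT ω, dotp]
  have hT_nonneg : 0 ≤ᵐ[μ] deflatedValue P Y H T := by
    have hC : ∀ᵐ ω ∂μ, ∀ s ∈ Finset.Icc 1 T,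
        0 ≤ dotp (H s ω - H (s + 1) ω) (P s ω) ∧ 0 < Y s ω := by
      refine (eventually_all_finset _).2 fun s hs => ?_
      obtain ⟨hs1, hsT⟩ := Finset.mem_Icc.1 hs
      exact (hSF s hs1 hsT).and (hYpos s)
    filter_upwards [hC] with ω hω
    rw [hT]
    exact Finset.sum_nonneg fun s hs => mul_nonneg (hω s hs).1 (hω s hs).2.le
  have h := integral_eq_of_isLocallyCentered_sub
    (adapted_deflatedValue P Y H hP hY fun t => (hHpred t).measurable)
    (fun t _ => deflatedValue_succ_sub P Y H t ▸ hPY.isLocallyCentered_dotp_sub (hHpred t))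
    hT_nonneg
  rwa [hT, deflatedValue_zero] at h

/-- If `Y` is a local martingale deflator and `H` a self-financing
investment-consumption strategy over horizon `T` with `H_{T+1} = 0` and initial
wealth `X_0 = H_1 ⬝ P_0`, then `E[∑_{s=0}^T C_s Y_s] = E[X_0 Y_0]` (here `C_0 = 0`
since `X_0 = H_1 ⬝ P_0`, and `C_T = H_T ⬝ P_T` since `H_{T+1} = 0`). -/
theorem stmt1 {Ω : Type*} {m : MeasurableSpace Ω} (μ : Measure Ω) [IsProbabilityMeasure μ]
    (ℱ : MeasureTheory.Filtration ℕ m) {n : ℕ}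
    (P : ℕ → Ω → Fin n → ℝ) (Y : ℕ → Ω → ℝ) (H : ℕ → Ω → Fin n → ℝ)
    (T : ℕ) (hT : 0 < T)
    (hP : Adapted ℱ P) (hY : Adapted ℱ Y)
    (hYpos : ∀ t, ∀ᵐ ω ∂μ, 0 < Y t ω)
    (hPY : IsLocalMartingale ℱ μ (fun t ω => Y t ω • P t ω))
    (hHpred : ∀ t, StronglyMeasurable[ℱ t] (H (t + 1)))
    (hSF : ∀ t, 1 ≤ t → t ≤ T →
      ∀ᵐ ω ∂μ, 0 ≤ dotp (H t ω - H (t + 1) ω) (P t ω))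
    (hHT : ∀ ω, H (T + 1) ω = 0) :
    ∫ ω, (∑ s ∈ Finset.Icc 1 T, dotp (H s ω - H (s + 1) ω) (P s ω) * Y s ω) ∂μ
      = ∫ ω, dotp (H 1 ω) (P 0 ω) * Y 0 ω ∂μ :=
  stmt1_general μ ℱ P Y H T hP hY hYpos hPY hHpred hSF hHT
end
end

section
/- Let p ∈ R^n be a constant vector and P an R^n-valued random vector such that for all h ∈ R^n: if h · p ≤ 0 and h · P ≥ 0 almost surely, then h · p = 0 and h · P = 0 almost surely. Then there exists a bounded random variable Y with Y > 0 almost surely and a constant y > 0 such that E[P Y] = y p; equivalently (after normalization) E[P Y] = p. -/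
/-!
Rogers' variational argument. For a payoff vector `X` put `F a = ∫ exp (⟪a, X⟫ - ‖X‖²) dν`; the
Gaussian damping makes `F` finite, convex and differentiable under the integral sign, and keeps
`exp (⟪a, X⟫ - ‖X‖²) • X` bounded. No arbitrage means that for every `u` outside the null space
`{u | ⟪u, X⟫ = 0 a.e.}` the payoff `⟪u, X⟫` is positive with positive probability, so `F` grows
at least linearly along the ray through `u`. As `F` is also invariant under the null space, it
attains its minimum at some `a`, and the vanishing gradient there says that the bounded positive
`Z = exp (⟪a, X⟫ - ‖X‖²)` satisfies `E[Z X] = 0`. The numéraire-free form follows by adjoining an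
atom on which the payoff is `-p`.
-/

open MeasureTheory

noncomputable section

open Set Filter
open scoped RealInnerProductSpace

section ConvexMinimum

variable {E : Type*} [NormedAddCommGroup E] [NormedSpace ℝ E] {f : E → ℝ}

theorem ConvexOn.lt_apply_smul_of_lt_apply_smul (hf : ConvexOn ℝ univ f) {u : E} {s t : ℝ}
    (hs : 0 < s) (hst : s ≤ t) (h : f 0 < f (s • u)) : f 0 < f (t • u) := by
  rcases hst.eq_or_lt with rfl | hst
  · exact h
  have ht : 0 < t := hs.trans hst
  have hcombo : (1 - s / t) • (0 : E) + (s / t) • t • u = s • u := by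
    rw [smul_zero, zero_add, smul_smul, div_mul_cancel₀ _ ht.ne']
  have key := hf.lt_right_of_left_lt' (mem_univ 0) (mem_univ (t • u))
    (sub_pos.2 ((div_lt_one ht).2 hst)) (div_pos hs ht) (sub_add_cancel 1 _)
  rw [hcombo] at key
  exact h.trans (key h)

variable [FiniteDimensional ℝ E]

theorem ConvexOn.exists_forall_le_of_ray (hf : ConvexOn ℝ univ f)
    (hray : ∀ u ≠ 0, ∃ t : ℝ, 0 < t ∧ f 0 < f (t • u)) : ∃ x, ∀ y, f x ≤ f y := by
  have hcont : Continuous f := continuousOn_univ.1 (hf.continuousOn isOpen_univ)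
  -- by convexity the open sets `{u | f 0 < f ((k + 1) • u)}` increase with `k`; they cover the
  -- compact unit sphere, hence one of them contains it
  obtain ⟨k, hk⟩ := (isCompact_sphere (0 : E) 1).elim_directed_cover
      (fun k : ℕ => {u | f 0 < f (((k : ℝ) + 1) • u)})
      (fun k => isOpen_lt continuous_const (hcont.comp (continuous_const_smul _)))
      (fun u hu => by
        obtain ⟨t, ht, hlt⟩ := hray u (ne_zero_of_mem_unit_sphere ⟨u, hu⟩)
        obtain ⟨k, hk⟩ := exists_nat_ge t
        exact mem_iUnion.2 ⟨k, hf.lt_apply_smul_of_lt_apply_smul ht (by linarith) hlt⟩)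
      (Monotone.directed_le fun i j hij u hu =>
        hf.lt_apply_smul_of_lt_apply_smul (by positivity) (by gcongr) hu)
  refine hcont.exists_forall_le' 0 ?_
  filter_upwards [(isCompact_closedBall (0 : E) ((k : ℝ) + 1)).compl_mem_cocompact] with x hx
  have hxk : (k : ℝ) + 1 < ‖x‖ := by simpa using hx
  have hx0 : ‖x‖ ≠ 0 := ((by positivity : (0 : ℝ) < k + 1).trans hxk).ne'
  have hu : ‖x‖⁻¹ • x ∈ Metric.sphere (0 : E) 1 := by
    simp [norm_smul, inv_mul_cancel₀ hx0]
  have := hf.lt_apply_smul_of_lt_apply_smul (by positivity) hxk.le (hk hu)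
  rw [smul_smul, mul_inv_cancel₀ hx0, one_smul] at this
  exact this.le

theorem ConvexOn.exists_forall_le_of_ray_of_invariant (hf : ConvexOn ℝ univ f)
    (L : Submodule ℝ E) (hL : ∀ x, ∀ l ∈ L, f (x + l) = f x)
    (hray : ∀ u ∉ L, ∃ t : ℝ, 0 < t ∧ f 0 < f (t • u)) : ∃ x, ∀ y, f x ≤ f y := by
  obtain ⟨W, hW⟩ := L.exists_isCompl
  have hfW : ConvexOn ℝ univ (f ∘ W.subtype) := hf.comp_linearMap W.subtype
  obtain ⟨w, hw⟩ := hfW.exists_forall_le_of_ray fun u hu => by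
    refine hray u fun huL => hu ?_
    have : (u : E) ∈ L ⊓ W := ⟨huL, u.2⟩
    rw [hW.inf_eq_bot, Submodule.mem_bot] at this
    exact Subtype.ext this
  refine ⟨w, fun y => ?_⟩
  obtain ⟨l, hl, v, hv, rfl⟩ := Submodule.mem_sup.1 (hW.sup_eq_top ▸ Submodule.mem_top : y ∈ L ⊔ W)
  rw [add_comm, hL v l hl]
  exact hw ⟨v, hv⟩

end ConvexMinimum

section Tilt

variable {E : Type*} [NormedAddCommGroup E] [InnerProductSpace ℝ E]

def tiltWeight (a x : E) : ℝ := Real.exp (⟪a, x⟫ - ‖x‖ ^ 2)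

lemma tiltWeight_pos (a x : E) : 0 < tiltWeight a x := Real.exp_pos _

lemma continuous_tiltWeight (a : E) : Continuous (tiltWeight a) := by
  unfold tiltWeight; fun_prop

lemma mul_sub_sq_le (r s : ℝ) : r * s - s ^ 2 ≤ r ^ 2 / 4 := by
  nlinarith [sq_nonneg (r - 2 * s)]

lemma tiltWeight_le (a x : E) : tiltWeight a x ≤ Real.exp (‖a‖ ^ 2 / 4) := by
  refine Real.exp_le_exp.2 ?_
  linarith [real_inner_le_norm a x, mul_sub_sq_le ‖a‖ ‖x‖]

lemma norm_mul_tiltWeight_le {a : E} {r : ℝ} (ha : ‖a‖ ≤ r) (x : E) :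
    ‖x‖ * tiltWeight a x ≤ Real.exp ((r + 1) ^ 2 / 4) := by
  calc ‖x‖ * tiltWeight a x ≤ Real.exp ‖x‖ * tiltWeight a x := by
        gcongr ?_ * _
        · exact (tiltWeight_pos a x).le
        · linarith [Real.add_one_le_exp ‖x‖]
    _ = Real.exp (‖x‖ + ⟪a, x⟫ - ‖x‖ ^ 2) := by rw [tiltWeight, ← Real.exp_add]; ring_nf
    _ ≤ Real.exp ((r + 1) ^ 2 / 4) := by
        refine Real.exp_le_exp.2 ?_
        have := mul_le_mul_of_nonneg_right ha (norm_nonneg x)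
        linarith [real_inner_le_norm a x, mul_sub_sq_le (r + 1) ‖x‖]

lemma convexOn_tiltWeight (x : E) : ConvexOn ℝ univ fun a => tiltWeight a x := by
  have := (convexOn_exp.comp_linearMap (innerₛₗ ℝ x)).smul (Real.exp_pos (-‖x‖ ^ 2)).le
  rw [preimage_univ] at this
  refine this.congr fun a _ => ?_
  simp [tiltWeight, sub_eq_add_neg, Real.exp_add, real_inner_comm, mul_comm]

lemma hasDerivAt_tiltWeight_add_smul (a v x : E) (t : ℝ) :
    HasDerivAt (fun s : ℝ => tiltWeight (a + s • v) x) (⟪v, x⟫ * tiltWeight (a + t • v) x) t := by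
  have : HasDerivAt (fun s : ℝ => ⟪a, x⟫ + s * ⟪v, x⟫ - ‖x‖ ^ 2) ⟪v, x⟫ t := by
    simpa using ((hasDerivAt_id t).mul_const ⟪v, x⟫).const_add ⟪a, x⟫ |>.sub_const (‖x‖ ^ 2)
  convert this.exp using 1
  · ext s; simp [tiltWeight, inner_add_left, inner_smul_left]
  · simp [tiltWeight, inner_add_left, inner_smul_left, mul_comm]

lemma tiltWeight_smul (t : ℝ) (u x : E) :
    tiltWeight (t • u) x = Real.exp (t * ⟪u, x⟫) * tiltWeight 0 x := by
  simp only [tiltWeight, inner_smul_left, inner_zero_left, ← Real.exp_add]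
  congr 1
  simp; ring

variable {Ω : Type*} [MeasurableSpace Ω] {ν : Measure Ω} {X : Ω → E}

def tiltPotential (ν : Measure Ω) (X : Ω → E) (a : E) : ℝ := ∫ ω, tiltWeight a (X ω) ∂ν

def aeOrthogonal (ν : Measure Ω) (X : Ω → E) : Submodule ℝ E where
  carrier := {a | ∀ᵐ ω ∂ν, ⟪a, X ω⟫ = 0}
  add_mem' {a b} (ha : ∀ᵐ ω ∂ν, ⟪a, X ω⟫ = 0) (hb : ∀ᵐ ω ∂ν, ⟪b, X ω⟫ = 0) := by
    show ∀ᵐ ω ∂ν, ⟪a + b, X ω⟫ = 0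
    filter_upwards [ha, hb] with ω ha hb
    rw [inner_add_left, ha, hb, add_zero]
  zero_mem' := by simp
  smul_mem' c a (ha : ∀ᵐ ω ∂ν, ⟪a, X ω⟫ = 0) := by
    show ∀ᵐ ω ∂ν, ⟪c • a, X ω⟫ = 0
    filter_upwards [ha] with ω ha
    rw [inner_smul_left, ha, mul_zero]

lemma tiltPotential_add_of_mem_aeOrthogonal {l : E} (hl : l ∈ aeOrthogonal ν X) (a : E) :
    tiltPotential ν X (a + l) = tiltPotential ν X a := by
  refine integral_congr_ae ?_
  filter_upwards [hl] with ω hω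
  simp only [tiltWeight, inner_add_left, hω, add_zero]

variable [MeasurableSpace E] [BorelSpace E] [IsFiniteMeasure ν]

lemma integrable_tiltWeight (hX : Measurable X) (a : E) :
    Integrable (fun ω => tiltWeight a (X ω)) ν :=
  .of_bound ((continuous_tiltWeight a).measurable.comp hX).aestronglyMeasurable _
    (.of_forall fun ω => by
      rw [Real.norm_of_nonneg (tiltWeight_pos a _).le]; exact tiltWeight_le a (X ω))

lemma integrable_tiltWeight_smul [FiniteDimensional ℝ E] (hX : Measurable X) (a : E) :
    Integrable (fun ω => tiltWeight a (X ω) • X ω) ν :=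
  .of_bound (((continuous_tiltWeight a).smul continuous_id).measurable.comp hX).aestronglyMeasurable
    _ (.of_forall fun ω => by
      rw [norm_smul, Real.norm_of_nonneg (tiltWeight_pos a _).le, mul_comm]
      exact norm_mul_tiltWeight_le le_rfl (X ω))

lemma convexOn_tiltPotential (hX : Measurable X) : ConvexOn ℝ univ (tiltPotential ν X) := by
  refine ⟨convex_univ, fun a _ b _ s t hs ht hst => ?_⟩
  have hint := fun c => integrable_tiltWeight (ν := ν) hX c
  calc tiltPotential ν X (s • a + t • b)
      ≤ ∫ ω, s * tiltWeight a (X ω) + t * tiltWeight b (X ω) ∂ν :=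
        integral_mono (hint _) (((hint a).const_mul s).add ((hint b).const_mul t))
          fun ω => (convexOn_tiltWeight (X ω)).2 (mem_univ a) (mem_univ b) hs ht hst
    _ = s • tiltPotential ν X a + t • tiltPotential ν X b := by
        rw [integral_add ((hint a).const_mul s) ((hint b).const_mul t), integral_const_mul,
          integral_const_mul]
        rfl

lemma exists_tiltPotential_lt_smul (hX : Measurable X) {u : E}
    (hu : ¬ ∀ᵐ ω ∂ν, ⟪u, X ω⟫ ≤ 0) :
    ∃ t : ℝ, 0 < t ∧ tiltPotential ν X 0 < tiltPotential ν X (t • u) := by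
  set g : Ω → ℝ := fun ω => max ⟪u, X ω⟫ 0 * tiltWeight 0 (X ω)
  have hg0 : 0 ≤ g := fun ω => mul_nonneg (le_max_right _ _) (tiltWeight_pos _ _).le
  have hgint : Integrable g ν := by
    have hcont : Continuous fun x : E => max ⟪u, x⟫ 0 * tiltWeight 0 x :=
      ((continuous_const.inner continuous_id).max continuous_const).mul (continuous_tiltWeight 0)
    refine .of_bound (hcont.measurable.comp hX).aestronglyMeasurable
      (‖u‖ * Real.exp ((0 + 1) ^ 2 / 4)) (.of_forall fun ω => ?_)
    rw [Real.norm_of_nonneg (hg0 ω)]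
    calc g ω ≤ ‖u‖ * ‖X ω‖ * tiltWeight 0 (X ω) :=
          mul_le_mul_of_nonneg_right (max_le (real_inner_le_norm _ _) (by positivity))
            (tiltWeight_pos _ _).le
      _ ≤ ‖u‖ * Real.exp ((0 + 1) ^ 2 / 4) := by
          rw [mul_assoc]; gcongr; exact norm_mul_tiltWeight_le norm_zero.le _
  have hc : 0 < ∫ ω, g ω ∂ν := by
    refine lt_of_le_of_ne (integral_nonneg hg0) fun h => hu ?_
    filter_upwards [(integral_eq_zero_iff_of_nonneg hg0 hgint).1 h.symm] with ω hω
    have := (mul_eq_zero.1 hω).resolve_right (tiltWeight_pos _ _).ne'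
    simpa using this
  -- `exp y ≥ max y 0` makes the potential grow at least linearly along `u`
  have hlow : ∀ t : ℝ, 0 ≤ t → t * ∫ ω, g ω ∂ν ≤ tiltPotential ν X (t • u) := by
    intro t ht
    rw [← integral_const_mul]
    refine integral_mono (hgint.const_mul t) (integrable_tiltWeight hX _) fun ω => ?_
    rw [tiltWeight_smul, ← mul_assoc, mul_max_of_nonneg _ _ ht, mul_zero]
    gcongr
    · exact (tiltWeight_pos _ _).le
    · exact max_le (by linarith [Real.add_one_le_exp (t * ⟪u, X ω⟫)]) (Real.exp_pos _).le
  set t := (|tiltPotential ν X 0| + 1) / ∫ ω, g ω ∂ν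
  refine ⟨t, by positivity, ?_⟩
  have := hlow t (by positivity)
  rw [div_mul_cancel₀ _ hc.ne'] at this
  linarith [le_abs_self (tiltPotential ν X 0)]

lemma hasDerivAt_tiltPotential_add_smul (hX : Measurable X) (a v : E) :
    HasDerivAt (fun t : ℝ => tiltPotential ν X (a + t • v))
      (∫ ω, ⟪v, X ω⟫ * tiltWeight a (X ω) ∂ν) 0 := by
  have hmeas : ∀ b : E, AEStronglyMeasurable (fun ω => tiltWeight b (X ω)) ν := fun b =>
    ((continuous_tiltWeight b).measurable.comp hX).aestronglyMeasurable
  have hbound : ∀ ω, ∀ t ∈ Metric.ball (0 : ℝ) 1,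
      ‖⟪v, X ω⟫ * tiltWeight (a + t • v) (X ω)‖ ≤ ‖v‖ * Real.exp ((‖a‖ + ‖v‖ + 1) ^ 2 / 4) := by
    intro ω t ht
    have ht1 : |t| ≤ 1 := by simpa using (Metric.mem_ball.1 ht).le
    have hnorm : ‖a + t • v‖ ≤ ‖a‖ + ‖v‖ := by
      calc ‖a + t • v‖ ≤ ‖a‖ + |t| * ‖v‖ := by simpa [norm_smul] using norm_add_le a (t • v)
        _ ≤ ‖a‖ + ‖v‖ := by gcongr; nlinarith [norm_nonneg v]
    rw [norm_mul, Real.norm_of_nonneg (tiltWeight_pos _ _).le]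
    calc |⟪v, X ω⟫| * tiltWeight (a + t • v) (X ω)
        ≤ ‖v‖ * ‖X ω‖ * tiltWeight (a + t • v) (X ω) :=
          mul_le_mul_of_nonneg_right (abs_real_inner_le_norm _ _) (tiltWeight_pos _ _).le
      _ ≤ ‖v‖ * Real.exp ((‖a‖ + ‖v‖ + 1) ^ 2 / 4) := by
          rw [mul_assoc]; gcongr; exact norm_mul_tiltWeight_le hnorm _
  have := hasDerivAt_integral_of_dominated_loc_of_deriv_le (μ := ν) (x₀ := 0)
    (F := fun t ω => tiltWeight (a + t • v) (X ω))
    (F' := fun t ω => ⟪v, X ω⟫ * tiltWeight (a + t • v) (X ω))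
    (Metric.ball_mem_nhds 0 one_pos) (.of_forall fun t => hmeas _)
    (integrable_tiltWeight hX _) ?_ (.of_forall hbound) (integrable_const _)
    (.of_forall fun ω t _ => hasDerivAt_tiltWeight_add_smul a v (X ω) t)
  · simpa [tiltPotential] using this.2
  · exact ((continuous_const.inner continuous_id).measurable.comp hX).aestronglyMeasurable.mul
      (hmeas _)

lemma integral_tiltWeight_smul_eq_zero [FiniteDimensional ℝ E] (hX : Measurable X) {a : E}
    (ha : ∀ b, tiltPotential ν X a ≤ tiltPotential ν X b) :
    ∫ ω, tiltWeight a (X ω) • X ω ∂ν = 0 := by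
  refine integral_eq_zero_of_forall_integral_inner_eq_zero ℝ _ (integrable_tiltWeight_smul hX a)
    fun v => ?_
  have hmin : IsLocalMin (fun t : ℝ => tiltPotential ν X (a + t • v)) 0 :=
    .of_forall fun t => by simpa using ha (a + t • v)
  simpa [inner_smul_right, mul_comm] using
    hmin.hasDerivAt_eq_zero (hasDerivAt_tiltPotential_add_smul hX a v)

end Tilt

section Classical

variable {Ω E : Type*} [MeasurableSpace Ω] {ν : Measure Ω} [IsFiniteMeasure ν]
  [NormedAddCommGroup E] [InnerProductSpace ℝ E] [FiniteDimensional ℝ E]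
  [MeasurableSpace E] [BorelSpace E] {X : Ω → E}

theorem exists_bounded_pos_integral_smul_eq_zero (hX : Measurable X)
    (hNA : ∀ a, (∀ᵐ ω ∂ν, 0 ≤ ⟪a, X ω⟫) → ∀ᵐ ω ∂ν, ⟪a, X ω⟫ = 0) :
    ∃ Z : Ω → ℝ, Measurable Z ∧ (∃ C, ∀ ω, |Z ω| ≤ C) ∧ (∀ ω, 0 < Z ω) ∧
      Integrable (fun ω => Z ω • X ω) ν ∧ ∫ ω, Z ω • X ω ∂ν = 0 := by
  have hray : ∀ u ∉ aeOrthogonal ν X, ∃ t : ℝ, 0 < t ∧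
      tiltPotential ν X 0 < tiltPotential ν X (t • u) := fun u hu =>
    exists_tiltPotential_lt_smul hX fun hle => hu <| by
      filter_upwards [hNA (-u) (by filter_upwards [hle] with ω hω; simpa using hω)] with ω hω
      simpa using hω
  obtain ⟨a, ha⟩ := (convexOn_tiltPotential hX).exists_forall_le_of_ray_of_invariant
    (aeOrthogonal ν X) (fun a l hl => tiltPotential_add_of_mem_aeOrthogonal hl a) hray
  refine ⟨fun ω => tiltWeight a (X ω), (continuous_tiltWeight a).measurable.comp hX,
    ⟨Real.exp (‖a‖ ^ 2 / 4), fun ω => ?_⟩, fun ω => tiltWeight_pos a _,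
    integrable_tiltWeight_smul hX a, integral_tiltWeight_smul_eq_zero hX ha⟩
  rw [abs_of_pos (tiltWeight_pos a _)]
  exact tiltWeight_le a (X ω)

end Classical

section NumeraireFree

variable {Ω E : Type*} [MeasurableSpace Ω] {μ : Measure Ω} [IsFiniteMeasure μ]
  [NormedAddCommGroup E] [InnerProductSpace ℝ E] [FiniteDimensional ℝ E]
  [MeasurableSpace E] [BorelSpace E] {X : Ω → E}

theorem exists_bounded_pos_integral_smul_eq {p : E} (hX : Measurable X)
    (hNA : ∀ a, ⟪a, p⟫ ≤ 0 → (∀ᵐ ω ∂μ, 0 ≤ ⟪a, X ω⟫) → ⟪a, p⟫ = 0 ∧ ∀ᵐ ω ∂μ, ⟪a, X ω⟫ = 0) :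
    ∃ Y : Ω → ℝ, Measurable Y ∧ (∃ C, ∀ ω, |Y ω| ≤ C) ∧ (∀ ω, 0 < Y ω) ∧
      Integrable (fun ω => Y ω • X ω) μ ∧ ∫ ω, Y ω • X ω ∂μ = p := by
  set ν : Measure (Ω ⊕ Unit) := μ.map Sum.inl + Measure.dirac (Sum.inr ())
  set X' : Ω ⊕ Unit → E := Sum.elim X fun _ => -p
  have hX' : Measurable X' := hX.sumElim measurable_const
  have hinl : MeasurableEmbedding (Sum.inl : Ω → Ω ⊕ Unit) :=
    ⟨Sum.inl_injective, measurable_inl, fun _ hs => hs.inl_image⟩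
  have hae : ∀ {q : E → Prop}, MeasurableSet {x | q x} →
      ((∀ᵐ z ∂ν, q (X' z)) ↔ (∀ᵐ ω ∂μ, q (X ω)) ∧ q (-p)) := fun {q} hq => by
    rw [ae_add_measure_iff, hinl.ae_map_iff, ae_dirac_iff (p := fun z => q (X' z)) (hX' hq)]
    rfl
  have hinner : ∀ a : E, Measurable fun x : E => ⟪a, x⟫ :=
    fun a => (continuous_const.inner continuous_id).measurable
  obtain ⟨Z, hZm, ⟨C, hC⟩, hZpos, hZint, hZ⟩ :=
    exists_bounded_pos_integral_smul_eq_zero hX' fun a ha => by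
      rw [hae (measurableSet_le measurable_const (hinner a))] at ha
      rw [hae (measurableSet_eq_fun (hinner a) measurable_const)]
      have := hNA a (by simpa using ha.2) ha.1
      exact ⟨this.2, by simpa using this.1⟩
  have hZX : Integrable (fun ω => Z (Sum.inl ω) • X ω) μ :=
    hinl.integrable_map_iff.1 (integrable_add_measure.1 hZint).1
  have hZp : ∫ ω, Z (Sum.inl ω) • X ω ∂μ = Z (Sum.inr ()) • p := by
    rw [integral_add_measure (integrable_add_measure.1 hZint).1 (integrable_add_measure.1 hZint).2,
      hinl.integral_map, integral_dirac' (fun z => Z z • X' z) _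
        (hZm.smul hX').stronglyMeasurable] at hZ
    simpa [X', smul_neg, add_neg_eq_zero] using hZ
  set c := Z (Sum.inr ())
  have hc : 0 < c := hZpos _
  refine ⟨fun ω => c⁻¹ * Z (Sum.inl ω), (hZm.comp measurable_inl).const_mul _,
    ⟨c⁻¹ * C, fun ω => ?_⟩, fun ω => mul_pos (inv_pos.2 hc) (hZpos _), ?_, ?_⟩
  · rw [abs_mul, abs_of_pos (inv_pos.2 hc)]
    exact mul_le_mul_of_nonneg_left (hC _) (inv_pos.2 hc).le
  · simp only [mul_smul]
    exact hZX.smul c⁻¹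
  · simp only [mul_smul]
    rw [integral_smul, hZp, smul_smul, inv_mul_cancel₀ hc.ne', one_smul]

end NumeraireFree

lemma inner_toLp_eq_dotp {n : ℕ} (a : EuclideanSpace ℝ (Fin n)) (x : Fin n → ℝ) :
    ⟪a, WithLp.toLp 2 x⟫ = dotp a.ofLp x := by
  simp [PiLp.inner_apply, dotp, mul_comm]

/-- one-period numéraire-free fundamental theorem of asset pricing.
If no `h` with `h ⬝ p ≤ 0 ≤ h ⬝ P` except degenerately, then there is a bounded
strictly positive deflator `Y` with `E[P Y] = p`. -/
theorem stmt5 {Ω : Type*} [MeasurableSpace Ω] (μ : Measure Ω) [IsProbabilityMeasure μ]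
    {n : ℕ} (p : Fin n → ℝ) (P : Ω → Fin n → ℝ) (hP : Measurable P)
    (hNA : ∀ h : Fin n → ℝ, dotp h p ≤ 0 → (∀ᵐ ω ∂μ, 0 ≤ dotp h (P ω)) →
      dotp h p = 0 ∧ ∀ᵐ ω ∂μ, dotp h (P ω) = 0) :
    ∃ Y : Ω → ℝ, Measurable Y ∧ (∃ Cb : ℝ, ∀ ω, |Y ω| ≤ Cb) ∧
      (∀ᵐ ω ∂μ, 0 < Y ω) ∧
      (∀ i, Integrable (fun ω => P ω i * Y ω) μ) ∧
      (∀ i, ∫ ω, P ω i * Y ω ∂μ = p i) := by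
  obtain ⟨Y, hYm, hYb, hYpos, hYint, hY⟩ := exists_bounded_pos_integral_smul_eq (μ := μ)
    (p := WithLp.toLp 2 p) (X := fun ω => WithLp.toLp 2 (P ω))
    ((PiLp.continuous_toLp 2 _).measurable.comp hP)
    fun a => by simpa only [inner_toLp_eq_dotp] using hNA a.ofLp
  refine ⟨Y, hYm, hYb, .of_forall hYpos, fun i => ?_, fun i => ?_⟩
  · simpa [mul_comm] using (EuclideanSpace.proj (𝕜 := ℝ) i).integrable_comp hYint
  · have := (EuclideanSpace.proj (𝕜 := ℝ) i).integral_comp_comm hYint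
    rw [hY] at this
    simpa [mul_comm] using this
end
end
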